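/- arXiv:1301.1328 — 2 statements merged into one kernel-verified Lean document; each statement's English description precedes it below -/
import Mathlib

section
/- Let f be a transcendental entire function. Then there exists R₁ = R₁(f) > 0 such that M(r^k) ≥ M(r)^k for all r ≥ R₁ and all real k > 1. -/
open Set Metric Filter

/-- `f` is a transcendental entire function: entire and not a polynomial. -/
def TranscendentalEntire (f : ℂ → ℂ) : Prop :=
  Differentiable ℂ f ∧ ¬ ∃ p : Polynomial ℂ, ∀ z, f z = p.eval z

/-- The maximum modulus `M(r) = max_{|z| = r} |f z|`. -/
noncomputable def maxMod (f : ℂ → ℂ) (r : ℝ) : ℝ :=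
  sSup ((fun z => ‖f z‖) '' Metric.sphere (0 : ℂ) r)

/-!
By Hadamard's three circles theorem, `s ↦ log M(eˢ)` is convex. Interpolating between `s = 1`
and `s = k log r` gives `M(r) ≤ M(e)^(1-t) M(r^k)^t` with `t = (log r - 1) / (k log r - 1)`.
Because `f` is not a polynomial, the Cauchy estimates force `M(ρ)` to outgrow every power of `ρ`,
in particular `M(ρ) ≥ M(e)^(log ρ)` for large `ρ`; applied at `ρ = r^k` this absorbs the factor
`M(e)^(1-t)` once both sides are raised to the power `k`.
-/

open scoped Nat

lemma norm_le_maxMod {f : ℂ → ℂ} (hf : Continuous f) {r : ℝ} {z : ℂ} (hz : z ∈ sphere 0 r) :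
    ‖f z‖ ≤ maxMod f r :=
  le_csSup ((isCompact_sphere 0 r).bddAbove_image hf.norm.continuousOn) ⟨z, hz, rfl⟩

lemma maxMod_le {f : ℂ → ℂ} {r C : ℝ} (hr : 0 ≤ r) (h : ∀ z ∈ sphere (0 : ℂ) r, ‖f z‖ ≤ C) :
    maxMod f r ≤ C :=
  csSup_le ((NormedSpace.sphere_nonempty.mpr hr).image _) (forall_mem_image.mpr h)

lemma maxMod_nonneg {f : ℂ → ℂ} (hf : Continuous f) {r : ℝ} (hr : 0 ≤ r) :
    0 ≤ maxMod f r := by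
  obtain ⟨z, hz⟩ := NormedSpace.sphere_nonempty (x := (0 : ℂ)).mpr hr
  exact (norm_nonneg _).trans (norm_le_maxMod hf hz)

lemma Differentiable.exists_polynomial_of_iteratedDeriv_eq_zero {f : ℂ → ℂ}
    (hd : Differentiable ℂ f) {n : ℕ} (h : ∀ m, n < m → iteratedDeriv m f 0 = 0) :
    ∃ p : Polynomial ℂ, ∀ z, f z = p.eval z := by
  refine ⟨∑ m ∈ Finset.range (n + 1),
    Polynomial.monomial m ((m ! : ℂ)⁻¹ * iteratedDeriv m f 0), fun z => ?_⟩
  have hsum : HasSum (fun m => (m ! : ℂ)⁻¹ * iteratedDeriv m f 0 * z ^ m) (f z) := by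
    simpa only [sub_zero, smul_eq_mul, mul_left_comm, mul_comm]
      using Complex.hasSum_taylorSeries_of_entire hd 0 z
  refine hsum.unique ?_
  simp only [Polynomial.eval_finsetSum, Polynomial.eval_monomial]
  exact hasSum_sum_of_ne_finset_zero fun m hm => by simp [h m (by simpa using hm)]

lemma iteratedDeriv_eq_zero_of_frequently_maxMod_lt {f : ℂ → ℂ} (hd : Differentiable ℂ f)
    {n m : ℕ} (hnm : n < m) (h : ∃ᶠ r in atTop, maxMod f r < r ^ n) :
    iteratedDeriv m f 0 = 0 := by
  have hlim : Tendsto (fun r : ℝ => m ! * r ^ n / r ^ m) atTop (nhds 0) := by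
    simpa [mul_div_assoc] using (tendsto_pow_div_pow_atTop_zero hnm).const_mul (m ! : ℝ)
  refine norm_le_zero_iff.mp (ge_of_tendsto_of_frequently hlim ?_)
  refine (h.and_eventually (eventually_gt_atTop 0)).mono fun r ⟨hr, hr0⟩ => ?_
  calc ‖iteratedDeriv m f 0‖ ≤ m ! * maxMod f r / r ^ m :=
        Complex.norm_iteratedDeriv_le_of_forall_mem_sphere_norm_le m hr0 hd.diffContOnCl
          fun z hz => norm_le_maxMod hd.continuous hz
    _ ≤ m ! * r ^ n / r ^ m := by gcongr

lemma TranscendentalEntire.eventually_pow_le_maxMod {f : ℂ → ℂ} (hf : TranscendentalEntire f)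
    (n : ℕ) : ∀ᶠ r in atTop, r ^ n ≤ maxMod f r := by
  by_contra h
  simp only [not_eventually, not_le] at h
  exact hf.2 <| hf.1.exists_polynomial_of_iteratedDeriv_eq_zero fun m hnm =>
    iteratedDeriv_eq_zero_of_frequently_maxMod_lt hf.1 hnm h

lemma TranscendentalEntire.eventually_rpow_log_le_maxMod {f : ℂ → ℂ}
    (hf : TranscendentalEntire f) {c : ℝ} (hc : 0 ≤ c) :
    ∀ᶠ ρ in atTop, c ^ Real.log ρ ≤ maxMod f ρ := by
  obtain ⟨n, hn⟩ := exists_nat_ge c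
  have hcn : c ≤ Real.exp n := by linarith [Real.add_one_le_exp n]
  filter_upwards [hf.eventually_pow_le_maxMod n, eventually_ge_atTop 1] with ρ hρ hρ1
  calc c ^ Real.log ρ ≤ Real.exp n ^ Real.log ρ := by gcongr; exact Real.log_nonneg hρ1
    _ = ρ ^ n := by
      rw [← Real.exp_mul, mul_comm, ← Real.rpow_def_of_pos (by linarith), Real.rpow_natCast]
    _ ≤ maxMod f ρ := hρ

open Complex HadamardThreeLines in
/-- Hadamard's three circles theorem, from the three lines theorem applied to `f ∘ exp`. -/
lemma maxMod_exp_le_interp {f : ℂ → ℂ} (hd : Differentiable ℂ f) {l u s : ℝ} (hlu : l < u)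
    (hs : s ∈ Icc l u) :
    maxMod f (Real.exp s) ≤
      maxMod f (Real.exp l) ^ (1 - (s - l) / (u - l)) *
        maxMod f (Real.exp u) ^ ((s - l) / (u - l)) := by
  have hbound : ∀ {a : ℝ} (z : ℂ), z.re = a → ‖f (exp z)‖ ≤ maxMod f (Real.exp a) :=
    fun z hz => norm_le_maxMod hd.continuous (by rw [mem_sphere_zero_iff_norm, norm_exp, hz])
  have hB : BddAbove ((norm ∘ (f ∘ exp)) '' verticalClosedStrip l u) := by
    refine ((isCompact_closedBall (0 : ℂ) (Real.exp u)).bddAbove_image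
      hd.continuous.norm.continuousOn).mono ?_
    rintro _ ⟨z, hz, rfl⟩
    refine ⟨exp z, ?_, rfl⟩
    rw [mem_closedBall_zero_iff, norm_exp]
    exact Real.exp_le_exp.mpr hz.2
  refine maxMod_le (Real.exp_pos s).le fun w hw => ?_
  have hw0 : w ≠ 0 := ne_zero_of_mem_sphere (Real.exp_pos s).ne' ⟨w, hw⟩
  have hlog : (log w).re = s := by
    rw [log_re, mem_sphere_zero_iff_norm.mp hw, Real.log_exp]
  rw [← exp_log hw0, ← hlog]
  exact norm_le_interp_of_mem_verticalClosedStrip' (f := f ∘ exp) hlu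
    (show (log w).re ∈ Icc l u from hlog ▸ hs) (hd.comp differentiable_exp).diffContOnCl hB
    (fun z hz => hbound z hz) fun z hz => hbound z hz

open Real in
lemma rpow_le_of_le_interp {m a u s k : ℝ} (hm : 0 ≤ m) (ha : 0 ≤ a) (hs : 1 ≤ s) (hk : 1 < k)
    (hmu : m ≤ a ^ (1 - (s - 1) / (k * s - 1)) * u ^ ((s - 1) / (k * s - 1)))
    (hau : a ^ (k * s) ≤ u) : m ^ k ≤ u := by
  set t := (s - 1) / (k * s - 1) with ht
  have hden : 0 < k * s - 1 := by nlinarith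
  have hu : 0 ≤ u := (rpow_nonneg ha _).trans hau
  have hkt : 1 - k * t = (k - 1) / (k * s - 1) := by rw [ht]; field_simp; ring
  have hkt0 : 0 ≤ 1 - k * t := by rw [hkt]; exact div_nonneg (by linarith) hden.le
  have hexp : k * (1 - t) = k * s * (1 - k * t) := by rw [hkt, ht]; field_simp; ring
  calc m ^ k ≤ (a ^ (1 - t) * u ^ t) ^ k := by gcongr
    _ = (a ^ (k * s)) ^ (1 - k * t) * u ^ (k * t) := by
      rw [mul_rpow (by positivity) (by positivity), ← rpow_mul ha, ← rpow_mul ha, ← rpow_mul hu,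
        mul_comm _ k, mul_comm t k, hexp]
    _ ≤ u ^ (1 - k * t) * u ^ (k * t) := by gcongr
    _ = u := by rw [← rpow_add' hu (by ring_nf; norm_num), sub_add_cancel, rpow_one]

theorem maxMod_rpow_ge (f : ℂ → ℂ) (hf : TranscendentalEntire f) :
    ∃ R₁ : ℝ, 0 < R₁ ∧ ∀ r : ℝ, R₁ ≤ r → ∀ k : ℝ, 1 < k →
      (maxMod f r) ^ k ≤ maxMod f (r ^ k) := by
  have hM : ∀ {r : ℝ}, 0 ≤ r → 0 ≤ maxMod f r := maxMod_nonneg hf.1.continuous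
  obtain ⟨R₀, hR₀⟩ := (hf.eventually_rpow_log_le_maxMod
    (hM (Real.exp_pos 1).le)).exists_forall_of_atTop
  refine ⟨max R₀ (Real.exp 1), by positivity, fun r hr k hk => ?_⟩
  obtain ⟨hR₀r, her⟩ := max_le_iff.mp hr
  have hr0 : 0 < r := (Real.exp_pos 1).trans_le her
  have hs : 1 ≤ Real.log r := (Real.le_log_iff_exp_le hr0).mpr her
  have hks : 1 < k * Real.log r := by nlinarith
  have hexp : Real.exp (k * Real.log r) = r ^ k := by rw [Real.rpow_def_of_pos hr0, mul_comm]
  have hinterp := maxMod_exp_le_interp hf.1 hks ⟨hs, by nlinarith⟩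
  rw [Real.exp_log hr0, hexp] at hinterp
  have hrk : r ≤ r ^ k :=
    Real.self_le_rpow_of_one_le ((Real.one_le_exp zero_le_one).trans her) hk.le
  have hgrowth := hR₀ (r ^ k) (hR₀r.trans hrk)
  rw [Real.log_rpow hr0] at hgrowth
  exact rpow_le_of_le_interp (hM hr0.le) (hM (Real.exp_pos 1).le) hs hk hinterp hgrowth
end

section
/- Let (E_n), n ≥ 0, be a sequence of nonempty compact subsets of ℂ and let f : ℂ → ℂ be a continuous function such that f(E_n) ⊇ E_{n+1} for all n ≥ 0. Then there exists ζ ∈ ℂ such that fⁿ(ζ) ∈ E_n for all n ≥ 0. -/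
open Set Metric Filter

theorem orbit_in_compact_sets (E : ℕ → Set ℂ) (f : ℂ → ℂ)
    (hE : ∀ n, IsCompact (E n)) (hne : ∀ n, (E n).Nonempty)
    (hf : Continuous f) (hcov : ∀ n, E (n + 1) ⊆ f '' E n) :
    ∃ ζ : ℂ, ∀ n : ℕ, f^[n] ζ ∈ E n := by
  set K : ℕ → Set ℂ := fun n => {z | ∀ k ≤ n, f^[k] z ∈ E k} with hK
  have hKsub : ∀ n, K n ⊆ E 0 := by
    intro n z hz
    simpa using hz 0 (Nat.zero_le n)
  have hKclosed : ∀ n, IsClosed (K n) := by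
    intro n
    have : K n = ⋂ k ∈ Finset.range (n + 1), f^[k] ⁻¹' E k := by
      ext z
      simp [hK, Nat.lt_succ_iff]
    rw [this]
    exact isClosed_biInter fun k _ =>
      ((hE k).isClosed).preimage (hf.iterate k)
  have hchain : ∀ n, ∀ w ∈ E n, ∃ z, f^[n] z = w ∧ z ∈ K n := by
    intro n
    induction n with
    | zero =>
      intro w hw
      exact ⟨w, rfl, fun k hk => by simpa [Nat.le_zero.mp hk] using hw⟩
    | succ n ih =>
      intro w hw
      obtain ⟨v, hv, hvw⟩ := hcov n hw
      obtain ⟨z, hz1, hz2⟩ := ih v hv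
      refine ⟨z, by rw [Function.iterate_succ_apply', hz1, hvw], ?_⟩
      intro k hk
      rcases Nat.lt_succ_iff_lt_or_eq.mp (Nat.lt_succ_of_le hk) with h | h
      · exact hz2 k (Nat.lt_succ_iff.mp h)
      · subst h
        rw [Function.iterate_succ_apply', hz1, hvw]; exact hw
  have hKne : ∀ n, (K n).Nonempty := by
    intro n
    obtain ⟨w, hw⟩ := hne n
    obtain ⟨z, _, hz⟩ := hchain n w hw
    exact ⟨z, hz⟩
  have hKmono : ∀ n, K (n + 1) ⊆ K n := by
    intro n z hz k hk
    exact hz k (hk.trans (Nat.le_succ n))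
  have hK0 : IsCompact (K 0) := (hE 0).of_isClosed_subset (hKclosed 0) (hKsub 0)
  obtain ⟨ζ, hζ⟩ := IsCompact.nonempty_iInter_of_sequence_nonempty_isCompact_isClosed
    K hKmono hKne hK0 hKclosed
  simp only [mem_iInter] at hζ
  exact ⟨ζ, fun n => hζ n n le_rfl⟩
end
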